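/- Let T be an invertible measure-preserving transformation of a probability space (X, μ), f ∈ L²_μ with Π_{𝒦_d⁻}^⊥ f ≠ 0, and let 𝒰_d : 𝒦_d → 𝒦_d be the compression of the Koopman operator, 𝒰_d g = Π_{𝒦_d}(g∘T). If (λ_d, φ_d) is an eigenpair of 𝒰_d with ‖φ_d‖_{L²_μ} = 1, then ‖φ_d∘T − λ_d φ_d‖_{L²_μ} ≤ ‖Π_{𝒦_d}^⊥(f∘T)‖_{L²_μ} / ‖Π_{𝒦_d⁻}^⊥ f‖_{L²_μ}; that is, λ_d lies in the ε-pseudospectrum of the Koopman operator 𝒰 with ε = ‖Π_{𝒦_d}^⊥ 𝒰 f‖ / ‖Π_{𝒦_d⁻}^⊥ f‖. -/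

import Mathlib

/-!
Write the eigenvector as `φ = c • f + g` with `g ∈ 𝒦_d⁻`. Since `𝒰` maps `𝒦_d⁻` into `𝒦_d`,
the residual `𝒰 φ - λ φ = Π_{𝒦_d}^⊥ (𝒰 φ)` equals `c • Π_{𝒦_d}^⊥ (𝒰 f)`, while
`c • Π_{𝒦_d⁻}^⊥ f = Π_{𝒦_d⁻}^⊥ φ` has norm at most `‖φ‖ = 1`, which bounds `‖c‖`.
-/

open MeasureTheory Filter

/-- The Koopman operator `𝒰_T : g ↦ g ∘ T` on `L²_μ`. -/
noncomputable def koopman {X : Type*} [MeasurableSpace X] {μ : Measure X}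
    (T : X → X) (hT : MeasurePreserving T μ μ) : Lp ℂ 2 μ →L[ℂ] Lp ℂ 2 μ :=
  (Lp.compMeasurePreservingₗᵢ ℂ T hT).toContinuousLinearMap

/-- The Krylov space `𝒦_d = span {f, f∘T⁻¹, …, f∘T^{-d+1}}`; `T'` plays the role of
the inverse of `T`. -/
noncomputable def krylov {X : Type*} [MeasurableSpace X] {μ : Measure X}
    (T' : X → X) (hT' : MeasurePreserving T' μ μ) (f : Lp ℂ 2 μ) (d : ℕ) :
    Submodule ℂ (Lp ℂ 2 μ) :=
  Submodule.span ℂ (Set.range fun j : Fin d => ((koopman T' hT') ^ (j : ℕ)) f)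

instance {X : Type*} [MeasurableSpace X] {μ : Measure X}
    (T' : X → X) (hT' : MeasurePreserving T' μ μ) (f : Lp ℂ 2 μ) (d : ℕ) :
    FiniteDimensional ℂ (krylov T' hT' f d) :=
  FiniteDimensional.span_of_finite ℂ (Set.finite_range _)

/-- The reduced Krylov space `𝒦_d⁻ = span {f∘T⁻¹, …, f∘T^{-d+1}}`. -/
noncomputable def krylovMinus {X : Type*} [MeasurableSpace X] {μ : Measure X}
    (T' : X → X) (hT' : MeasurePreserving T' μ μ) (f : Lp ℂ 2 μ) (d : ℕ) :
    Submodule ℂ (Lp ℂ 2 μ) :=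
  Submodule.span ℂ (Set.range fun j : Fin (d - 1) => ((koopman T' hT') ^ ((j : ℕ) + 1)) f)

instance {X : Type*} [MeasurableSpace X] {μ : Measure X}
    (T' : X → X) (hT' : MeasurePreserving T' μ μ) (f : Lp ℂ 2 μ) (d : ℕ) :
    FiniteDimensional ℂ (krylovMinus T' hT' f d) :=
  FiniteDimensional.span_of_finite ℂ (Set.finite_range _)

/-- The compression `𝒰_d = Π_{𝒦_d} ∘ 𝒰 : 𝒦_d → 𝒦_d` of the Koopman operator to the
Krylov space. -/
noncomputable def compressedKoopman {X : Type*} [MeasurableSpace X] {μ : Measure X}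
    (T T' : X → X) (hT : MeasurePreserving T μ μ) (hT' : MeasurePreserving T' μ μ)
    (f : Lp ℂ 2 μ) (d : ℕ) :
    krylov T' hT' f d →L[ℂ] krylov T' hT' f d :=
  (Submodule.orthogonalProjectionOnto (krylov T' hT' f d)).comp
    ((koopman T hT).comp (krylov T' hT' f d).subtypeL)

namespace Submodule

variable {𝕜 E : Type*} [RCLike 𝕜] [NormedAddCommGroup E] [InnerProductSpace 𝕜 E]

theorem starProjection_orthogonal_smul_add_of_mem {K : Submodule 𝕜 E} [K.HasOrthogonalProjection]
    (c : 𝕜) (x : E) {g : E} (hg : g ∈ K) :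
    Kᗮ.starProjection (c • x + g) = c • Kᗮ.starProjection x := by
  rw [map_add, map_smul, starProjection_orthogonal_apply_eq_zero hg, add_zero]

theorem norm_apply_sub_smul_le_of_starProjection_apply_eq_smul {K L : Submodule 𝕜 E}
    [K.HasOrthogonalProjection] [L.HasOrthogonalProjection] (U : E →ₗ[𝕜] E) {f : E}
    (hK : K ≤ (𝕜 ∙ f) ⊔ L) (hUL : L ≤ K.comap U) (hf : Lᗮ.starProjection f ≠ 0)
    {φ : E} (hφ : φ ∈ K) {lam : 𝕜} (heig : K.starProjection (U φ) = lam • φ) :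
    ‖U φ - lam • φ‖ ≤ ‖Kᗮ.starProjection (U f)‖ / ‖Lᗮ.starProjection f‖ * ‖φ‖ := by
  obtain ⟨y, hy, g, hg, rfl⟩ := mem_sup.mp (hK hφ)
  obtain ⟨c, rfl⟩ := mem_span_singleton.mp hy
  have hres : U (c • f + g) - lam • (c • f + g) = c • Kᗮ.starProjection (U f) := by
    rw [← heig, ← starProjection_orthogonal_val, map_add, map_smul,
      starProjection_orthogonal_smul_add_of_mem _ _ (mem_comap.mp (hUL hg))]
  have hcoef : ‖c‖ * ‖Lᗮ.starProjection f‖ ≤ ‖c • f + g‖ := by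
    rw [← norm_smul, ← starProjection_orthogonal_smul_add_of_mem _ _ hg]
    exact Lᗮ.norm_starProjection_apply_le _
  rw [hres, norm_smul, div_mul_eq_mul_div, le_div_iff₀ (norm_pos_iff.mpr hf)]
  calc ‖c‖ * ‖Kᗮ.starProjection (U f)‖ * ‖Lᗮ.starProjection f‖
      = ‖Kᗮ.starProjection (U f)‖ * (‖c‖ * ‖Lᗮ.starProjection f‖) := by ring
    _ ≤ ‖Kᗮ.starProjection (U f)‖ * ‖c • f + g‖ := by gcongr

end Submodule

section Koopman

variable {X : Type*} [MeasurableSpace X] {μ : Measure X}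

theorem koopman_koopman_of_ae_leftInverse {T T' : X → X} (hT : MeasurePreserving T μ μ)
    (hT' : MeasurePreserving T' μ μ) (hinv : ∀ᵐ x ∂μ, T' (T x) = x) (g : Lp ℂ 2 μ) :
    koopman T hT (koopman T' hT' g) = g := by
  apply Lp.ext
  calc (koopman T hT (koopman T' hT' g) : X → ℂ) =ᵐ[μ] (koopman T' hT' g) ∘ T :=
        Lp.coeFn_compMeasurePreserving _ hT
    _ =ᵐ[μ] ((g : X → ℂ) ∘ T') ∘ T :=
        hT.quasiMeasurePreserving.ae_eq_comp (Lp.coeFn_compMeasurePreserving g hT')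
    _ =ᵐ[μ] g := hinv.mono fun x hx => by simp [hx]

theorem krylov_le_span_sup_krylovMinus {T' : X → X} (hT' : MeasurePreserving T' μ μ)
    (f : Lp ℂ 2 μ) (d : ℕ) :
    krylov T' hT' f d ≤ (ℂ ∙ f) ⊔ krylovMinus T' hT' f d := by
  refine Submodule.span_le.mpr ?_
  rintro _ ⟨⟨_ | k, hk⟩, rfl⟩
  · exact Submodule.mem_sup_left (Submodule.mem_span_singleton_self f)
  · exact Submodule.mem_sup_right (Submodule.subset_span ⟨⟨k, by omega⟩, rfl⟩)

theorem krylovMinus_le_comap_koopman_krylov {T T' : X → X} (hT : MeasurePreserving T μ μ)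
    (hT' : MeasurePreserving T' μ μ) (hinv : ∀ᵐ x ∂μ, T' (T x) = x) (f : Lp ℂ 2 μ) (d : ℕ) :
    krylovMinus T' hT' f d ≤ (krylov T' hT' f d).comap (koopman T hT).toLinearMap := by
  refine Submodule.span_le.mpr ?_
  rintro _ ⟨⟨k, hk⟩, rfl⟩
  change koopman T hT ((koopman T' hT' ^ (k + 1)) f) ∈ krylov T' hT' f d
  rw [pow_succ', mul_apply_eq_comp, koopman_koopman_of_ae_leftInverse hT hT' hinv]
  exact Submodule.subset_span ⟨⟨k, by omega⟩, rfl⟩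

end Koopman

theorem compressedKoopman_eigenvalue_pseudospectrum_general
    {X : Type*} [MeasurableSpace X] (μ : Measure X)
    (T T' : X → X) (hT : MeasurePreserving T μ μ) (hT' : MeasurePreserving T' μ μ)
    (hinv₁ : ∀ᵐ x ∂μ, T' (T x) = x)
    (f : Lp ℂ 2 μ) (d : ℕ)
    (hne : f - ((Submodule.orthogonalProjectionOnto (krylovMinus T' hT' f d)) f : Lp ℂ 2 μ) ≠ 0)
    (lam : ℂ) (φ : krylov T' hT' f d) (hφ : ‖(φ : Lp ℂ 2 μ)‖ = 1)
    (heig : compressedKoopman T T' hT hT' f d φ = lam • φ) :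
    ‖koopman T hT (φ : Lp ℂ 2 μ) - lam • (φ : Lp ℂ 2 μ)‖ ≤
      ‖koopman T hT f -
          ((Submodule.orthogonalProjectionOnto (krylov T' hT' f d)) (koopman T hT f) : Lp ℂ 2 μ)‖ /
        ‖f - ((Submodule.orthogonalProjectionOnto (krylovMinus T' hT' f d)) f : Lp ℂ 2 μ)‖ := by
  simp only [← Submodule.starProjection_apply, ← Submodule.starProjection_orthogonal_val] at hne ⊢
  have heig' : (krylov T' hT' f d).starProjection (koopman T hT φ) = lam • (φ : Lp ℂ 2 μ) :=
    congrArg Subtype.val heig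
  simpa [hφ] using Submodule.norm_apply_sub_smul_le_of_starProjection_apply_eq_smul
    (koopman T hT).toLinearMap (krylov_le_span_sup_krylovMinus hT' f d)
    (krylovMinus_le_comap_koopman_krylov hT hT' hinv₁ f d) hne φ.2 heig'

/-- pseudospectral bound.  If `(λ_d, φ_d)` is a unit-norm eigenpair of the
compression `𝒰_d` of the Koopman operator to the Krylov space `𝒦_d`, and
`Π_{𝒦_d⁻}^⊥ f ≠ 0`, then
`‖𝒰 φ_d − λ_d φ_d‖ ≤ ‖Π_{𝒦_d}^⊥(𝒰 f)‖ / ‖Π_{𝒦_d⁻}^⊥ f‖`, i.e. `λ_d` lies in the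
`ε`-pseudospectrum of `𝒰` with this `ε`. -/
theorem compressedKoopman_eigenvalue_pseudospectrum
    {X : Type*} [MeasurableSpace X] (μ : Measure X) [IsProbabilityMeasure μ]
    (T T' : X → X) (hT : MeasurePreserving T μ μ) (hT' : MeasurePreserving T' μ μ)
    (hinv₁ : ∀ᵐ x ∂μ, T' (T x) = x) (hinv₂ : ∀ᵐ x ∂μ, T (T' x) = x)
    (f : Lp ℂ 2 μ) (d : ℕ)
    (hne : f - ((Submodule.orthogonalProjectionOnto (krylovMinus T' hT' f d)) f : Lp ℂ 2 μ) ≠ 0)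
    (lam : ℂ) (φ : krylov T' hT' f d) (hφ : ‖(φ : Lp ℂ 2 μ)‖ = 1)
    (heig : compressedKoopman T T' hT hT' f d φ = lam • φ) :
    ‖koopman T hT (φ : Lp ℂ 2 μ) - lam • (φ : Lp ℂ 2 μ)‖ ≤
      ‖koopman T hT f -
          ((Submodule.orthogonalProjectionOnto (krylov T' hT' f d)) (koopman T hT f) : Lp ℂ 2 μ)‖ /
        ‖f - ((Submodule.orthogonalProjectionOnto (krylovMinus T' hT' f d)) f : Lp ℂ 2 μ)‖ :=
  compressedKoopman_eigenvalue_pseudospectrum_general μ T T' hT hT' hinv₁ f d hne lam φ hφ heig
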